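/- In a finite generalised quadrangle of order (s,t) with s,t ≥ 1, s+t divides st(st+1). -/

import Mathlib

/-! The collinearity graph of a generalised quadrangle of order `(s, t)` is strongly regular with
parameters `((s + 1)(st + 1), s(t + 1), s - 1, t + 1)`. Its adjacency matrix `A` therefore satisfies
`(A - (s - 1))(A + (t + 1)) = (t + 1) J`, and as `A J = s(t + 1) J`, every eigenvalue of `A` is
`s(t + 1)`, `s - 1` or `-(t + 1)`. Evaluating the trace of `(A - s(t + 1))(A + (t + 1))` in two ways
shows that the multiplicity `f` of the eigenvalue `s - 1` satisfies
`f (s + t) = st(s + 1)(t + 1) = st(st + 1) + st(s + t)`. -/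

/-- A (finite) generalised quadrangle of order `(s, t)`: every line is incident
with exactly `s + 1` points, every point is incident with exactly `t + 1` lines,
any two distinct points lie on at most one common line, and for every
non-incident point-line pair `(p, l)` there is a unique point on `l`
collinear with `p`. -/
structure GenQuadrangle (P L : Type*) (s t : ℕ) where
  inc : P → L → Prop
  pts_per_line : ∀ l : L, Nat.card {p : P // inc p l} = s + 1
  lines_per_pt : ∀ p : P, Nat.card {l : L // inc p l} = t + 1
  unique_line : ∀ ⦃p q : P⦄ ⦃l m : L⦄, p ≠ q →
      inc p l → inc q l → inc p m → inc q m → l = m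
  gq_axiom : ∀ (p : P) (l : L), ¬ inc p l →
      ∃! q : P, inc q l ∧ ∃ m : L, inc p m ∧ inc q m

/-- Two points are collinear if they are distinct and lie on a common line. -/
def GenQuadrangle.Collinear {P L : Type*} {s t : ℕ} (Q : GenQuadrangle P L s t)
    (p q : P) : Prop :=
  p ≠ q ∧ ∃ l : L, Q.inc p l ∧ Q.inc q l

namespace Matrix.IsHermitian

open Polynomial

variable {𝕜 n : Type*} [RCLike 𝕜] [Fintype n] [DecidableEq n] {A : Matrix n n 𝕜}

theorem trace_pow_eq_sum_eigenvalues_pow (hA : A.IsHermitian) (k : ℕ) :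
    (A ^ k).trace = ∑ i, (hA.eigenvalues i : 𝕜) ^ k := by
  conv_lhs => rw [hA.spectral_theorem]
  rw [← map_pow, Unitary.conjStarAlgAut_apply, trace_mul_cycle,
    Unitary.coe_star_mul_self, one_mul, diagonal_pow, trace_diagonal]
  rfl

theorem eval_eigenvalues_eq_zero_of_aeval_eq_zero (hA : A.IsHermitian) {q : ℝ[X]}
    (hq : aeval A q = 0) (i : n) :
    q.eval (hA.eigenvalues i) = 0 := by
  have : Nonempty n := ⟨i⟩
  simpa [hq, spectrum.zero_eq] using
    spectrum.subset_polynomial_aeval A q ⟨_, hA.eigenvalues_mem_spectrum_real i, rfl⟩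

end Matrix.IsHermitian

namespace SimpleGraph

open Matrix Polynomial Finset

variable {V α : Type*} [Fintype V] {G : SimpleGraph V} [DecidableRel G.Adj]
  {n k ℓ μ : ℕ}

theorem IsRegularOfDegree.adjMatrix_mul_of_one [NonAssocSemiring α]
    (h : G.IsRegularOfDegree k) :
    G.adjMatrix α * of 1 = (k : α) • of 1 := by
  ext v w
  simp [h v]

theorem IsSRGWith.adjMatrix_sq_eq [DecidableEq V] [CommRing α] (h : G.IsSRGWith n k ℓ μ) :
    G.adjMatrix α ^ 2 =
      ((ℓ : α) - μ) • G.adjMatrix α + ((k : α) - μ) • 1 + (μ : α) • of 1 := by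
  classical
  have hJ := G.one_add_adjMatrix_add_compl_adjMatrix_eq_of_one (α := α)
  rw [h.matrix_eq, ← hJ, G.compl_adjMatrix_eq_adjMatrix_compl α]
  module

theorem IsSRGWith.adjMatrix_sub_mul_adjMatrix_sub [DecidableEq V] [CommRing α]
    (h : G.IsSRGWith n k ℓ μ) {r r' : α} (hsum : r + r' = ℓ - μ) (hprod : r * r' = μ - k) :
    (G.adjMatrix α - r • 1) * (G.adjMatrix α - r' • 1) = (μ : α) • of 1 := by
  have hsq := h.adjMatrix_sq_eq (α := α)
  rw [sq, ← hsum, ← neg_sub, ← hprod] at hsq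
  simp only [sub_mul, mul_sub, smul_mul_smul_comm, Matrix.mul_smul, Matrix.smul_mul, mul_one,
    one_mul, hsq]
  module

theorem IsSRGWith.eigenvalues_cubic_eq_zero [DecidableEq V] (h : G.IsSRGWith n k ℓ μ) {r r' : ℝ}
    (hsum : r + r' = ℓ - μ) (hprod : r * r' = μ - k) (i : V) :
    letI x := (G.isHermitian_adjMatrix ℝ).eigenvalues i
    (x - k) * (x - r) * (x - r') = 0 := by
  have hq : aeval (G.adjMatrix ℝ) ((X - C (k : ℝ)) * (X - C r) * (X - C r')) = 0 := by
    simp only [map_mul, map_sub, aeval_X, aeval_C, Algebra.algebraMap_eq_smul_one]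
    rw [mul_assoc, h.adjMatrix_sub_mul_adjMatrix_sub hsum hprod, sub_mul, Matrix.mul_smul,
      h.regular.adjMatrix_mul_of_one, Matrix.smul_mul, one_mul, smul_comm, sub_self]
  simpa using (G.isHermitian_adjMatrix ℝ).eval_eigenvalues_eq_zero_of_aeval_eq_zero hq i

theorem IsSRGWith.card_eigenvalues_eq_mul [DecidableEq V] (h : G.IsSRGWith n k ℓ μ) {r r' : ℝ}
    (hsum : r + r' = ℓ - μ) (hprod : r * r' = μ - k) :
    #{i | (G.isHermitian_adjMatrix ℝ).eigenvalues i = r} * ((r - k) * (r - r')) =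
      n * k * (1 + r') := by
  set hA := G.isHermitian_adjMatrix ℝ
  set x := hA.eigenvalues
  have hterm (i : V) : (x i - k) * (x i - r') = if x i = r then (r - k) * (r - r') else 0 := by
    split_ifs with hi
    · rw [hi]
    · have hroot := h.eigenvalues_cubic_eq_zero hsum hprod i
      rw [mul_right_comm] at hroot
      exact (mul_eq_zero.1 hroot).resolve_right (sub_ne_zero.2 hi)
  have htrace (m : ℕ) : ∑ i, x i ^ m = (G.adjMatrix ℝ ^ m).trace := by
    simpa using (hA.trace_pow_eq_sum_eigenvalues_pow m).symm
  calc (#{i | x i = r} : ℝ) * ((r - k) * (r - r')) = ∑ i, (x i - k) * (x i - r') := by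
        rw [sum_congr rfl fun i _ ↦ hterm i, ← sum_filter, sum_const, nsmul_eq_mul]
    _ = ∑ i, x i ^ 2 - (k + r') * ∑ i, x i ^ 1 + k * r' * ∑ i, x i ^ 0 := by
        simp only [mul_sum, ← sum_sub_distrib, ← sum_add_distrib]
        exact sum_congr rfl fun i _ ↦ by ring
    _ = n * k * (1 + r') := by
        rw [htrace, htrace, htrace, h.adjMatrix_sq_eq]
        simp [Matrix.trace, h.card]
        ring

end SimpleGraph

namespace GenQuadrangle

open Finset

variable {P L : Type*} {s t : ℕ} (Q : GenQuadrangle P L s t)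

def collinearityGraph : SimpleGraph P where
  Adj := Q.Collinear
  symm := ⟨fun _ _ ⟨hne, l, hp, hq⟩ ↦ ⟨hne.symm, l, hq, hp⟩⟩
  loopless := ⟨fun _ h ↦ h.1 rfl⟩

theorem inc_of_collinear_of_collinear {p q r : P} {l : L} (hne : p ≠ q) (hp : Q.inc p l)
    (hq : Q.inc q l) (hpr : Q.Collinear p r) (hqr : Q.Collinear q r) : Q.inc r l := by
  by_contra hr
  obtain ⟨_, m, hpm, hrm⟩ := hpr
  obtain ⟨_, m', hqm', hrm'⟩ := hqr
  exact hne <| (Q.gq_axiom r l hr).unique ⟨hp, m, hrm, hpm⟩ ⟨hq, m', hrm', hqm'⟩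

section Finite

open scoped Classical

theorem card_filter_inc_left [Fintype P] (l : L) : #{p | Q.inc p l} = s + 1 := by
  rw [← Fintype.card_subtype, ← Nat.card_eq_fintype_card, Q.pts_per_line]

theorem card_filter_inc_right [Fintype L] (p : P) : #{l | Q.inc p l} = t + 1 := by
  rw [← Fintype.card_subtype, ← Nat.card_eq_fintype_card, Q.lines_per_pt]

theorem card_common_lines_of_collinear [Fintype L] {p q : P} (h : Q.Collinear p q) :
    #{l | Q.inc p l ∧ Q.inc q l} = 1 := by
  obtain ⟨hne, l, hp, hq⟩ := h
  refine card_eq_one.2 ⟨l, ext fun m ↦ ?_⟩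
  simp only [mem_filter, mem_univ, true_and, mem_singleton]
  exact ⟨fun ⟨hpm, hqm⟩ ↦ Q.unique_line hne hpm hqm hp hq, by rintro rfl; exact ⟨hp, hq⟩⟩

theorem card_collinear [Fintype P] [Fintype L] (p : P) :
    #{q | Q.Collinear p q} = s * (t + 1) := by
  have := card_mul_eq_card_mul (s := {q | Q.Collinear p q}) (t := {l | Q.inc p l})
    (m := 1) (n := s) (fun q l ↦ Q.inc q l) (fun q hq ↦ ?_) (fun l hl ↦ ?_)
  · rwa [mul_one, card_filter_inc_right, mul_comm] at this
  · simp only [bipartiteAbove, filter_filter]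
    exact Q.card_common_lines_of_collinear (by simpa using hq)
  · have hpl : Q.inc p l := by simpa using hl
    have : ({q | Q.Collinear p q} : Finset P).bipartiteBelow (fun q l ↦ Q.inc q l) l =
        ({q | Q.inc q l} : Finset P).erase p := by
      ext q
      simp only [bipartiteBelow, mem_filter, mem_univ, true_and, mem_erase]
      exact ⟨fun ⟨hpq, hq⟩ ↦ ⟨hpq.1.symm, hq⟩, fun ⟨hqp, hq⟩ ↦ ⟨⟨Ne.symm hqp, l, hpl, hq⟩, hq⟩⟩
    rw [this, card_erase_of_mem (by simpa using hpl), card_filter_inc_left, Nat.add_sub_cancel]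

theorem card_collinear_collinear_of_collinear [Fintype P] [Fintype L] {p q : P} (h : Q.Collinear p q) :
    #{r | Q.Collinear p r ∧ Q.Collinear q r} = s - 1 := by
  obtain ⟨hne, l, hpl, hql⟩ := h
  have : ({r | Q.Collinear p r ∧ Q.Collinear q r} : Finset P) =
      (({r | Q.inc r l} : Finset P).erase p).erase q := by
    ext r
    simp only [mem_filter, mem_univ, true_and, mem_erase]
    constructor
    · rintro ⟨hpr, hqr⟩
      exact ⟨hqr.1.symm, hpr.1.symm, Q.inc_of_collinear_of_collinear hne hpl hql hpr hqr⟩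
    · rintro ⟨hrq, hrp, hrl⟩
      exact ⟨⟨Ne.symm hrp, l, hpl, hrl⟩, ⟨Ne.symm hrq, l, hql, hrl⟩⟩
  rw [this, card_erase_of_mem (by simpa using ⟨hne.symm, hql⟩),
    card_erase_of_mem (by simpa using hpl), card_filter_inc_left]
  rfl

theorem card_collinear_collinear_of_not_collinear [Fintype P] [Fintype L] {p q : P} (hne : p ≠ q)
    (h : ¬ Q.Collinear p q) :
    #{r | Q.Collinear p r ∧ Q.Collinear q r} = t + 1 := by
  have := card_mul_eq_card_mul (s := {r | Q.Collinear p r ∧ Q.Collinear q r})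
    (t := {l | Q.inc q l}) (m := 1) (n := 1) (fun r l ↦ Q.inc r l) (fun r hr ↦ ?_) (fun l hl ↦ ?_)
  · rwa [mul_one, mul_one, card_filter_inc_right] at this
  · simp only [bipartiteAbove, filter_filter]
    have hr : Q.Collinear p r ∧ Q.Collinear q r := by simpa using hr
    exact Q.card_common_lines_of_collinear hr.2
  · have hql : Q.inc q l := by simpa using hl
    have hpl : ¬ Q.inc p l := fun hpl ↦ h ⟨hne, l, hpl, hql⟩
    obtain ⟨x, ⟨hxl, m, hpm, hxm⟩, hx⟩ := Q.gq_axiom p l hpl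
    have hpx : Q.Collinear p x := ⟨fun hpx ↦ hpl (hpx ▸ hxl), m, hpm, hxm⟩
    refine card_eq_one.2 ⟨x, ext fun r ↦ ?_⟩
    simp only [bipartiteBelow, mem_filter, mem_univ, true_and, mem_singleton]
    constructor
    · rintro ⟨⟨⟨_, m', hpm', hrm'⟩, _⟩, hrl⟩
      exact hx r ⟨hrl, m', hpm', hrm'⟩
    · rintro rfl
      exact ⟨⟨hpx, fun hqr ↦ h (hqr ▸ hpx), l, hql, hxl⟩, hxl⟩

theorem isSRGWith_collinearityGraph [Fintype P] [Fintype L]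
    [DecidableRel Q.collinearityGraph.Adj] :
    Q.collinearityGraph.IsSRGWith (Fintype.card P) (s * (t + 1)) (s - 1) (t + 1) := by
  have hcommon (p q : P) : Fintype.card (Q.collinearityGraph.commonNeighbors p q) =
      #{r | Q.Collinear p r ∧ Q.Collinear q r} := by
    rw [← Fintype.card_subtype]
    exact Fintype.card_congr (.subtypeEquivRight fun _ ↦ .rfl)
  refine ⟨rfl, fun p ↦ ?_, fun p q h ↦ ?_, fun p q hne h ↦ ?_⟩
  · rw [← SimpleGraph.card_neighborSet_eq_degree, ← Q.card_collinear p, ← Fintype.card_subtype]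
    exact Fintype.card_congr (.subtypeEquivRight fun _ ↦ .rfl)
  · rw [hcommon, Q.card_collinear_collinear_of_collinear h]
  · rw [hcommon, Q.card_collinear_collinear_of_not_collinear hne h]

theorem card_points [Fintype P] [Fintype L] [Nonempty P] (Q : GenQuadrangle P L s t)
    (hs : 1 ≤ s) : Fintype.card P = (s + 1) * (s * t + 1) := by
  classical
  have hsrg := Q.isSRGWith_collinearityGraph
  have hparam := hsrg.param_eq _ Fintype.card_pos
  have hdeg : s * (t + 1) < Fintype.card P :=
    hsrg.regular (Classical.arbitrary P) ▸ SimpleGraph.degree_lt_card_verts _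
  have hsub : s * (t + 1) - (s - 1) - 1 = s * t := by
    rw [Nat.sub_sub, Nat.sub_add_cancel hs]
    exact Nat.sub_eq_of_eq_add (by ring)
  rw [hsub, mul_right_comm, ← mul_assoc] at hparam
  have hn : Fintype.card P = s * s * t + s * (t + 1) + 1 := by
    have := Nat.eq_of_mul_eq_mul_right t.succ_pos hparam
    omega
  rw [hn]
  ring

theorem card_eigenvalues_eq_sub_one_mul [Fintype P] [Fintype L] [Nonempty P] (hs : 1 ≤ s) :
    #{i | (Q.collinearityGraph.isHermitian_adjMatrix ℝ).eigenvalues i = s - 1} * (s + t) =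
      s * t * (s + 1) * (t + 1) := by
  have hsrg := Q.isSRGWith_collinearityGraph
  rw [Q.card_points hs] at hsrg
  have hmult := hsrg.card_eigenvalues_eq_mul (r := s - 1) (r' := -(t + 1))
    (by push_cast [Nat.cast_sub hs]; ring) (by push_cast; ring)
  push_cast at hmult
  have hreal : (#{i | (Q.collinearityGraph.isHermitian_adjMatrix ℝ).eigenvalues i = s - 1} *
      (s + t) : ℝ) * (s * t + 1) = s * t * (s + 1) * (t + 1) * (s * t + 1) := by
    linear_combination -hmult
  exact_mod_cast mul_right_cancel₀ (by positivity) hreal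

end Finite

end GenQuadrangle

theorem s_add_t_dvd_general {P L : Type*} [Fintype P] [Fintype L] [Nonempty P]
    {s t : ℕ} (hs : 1 ≤ s) (Q : GenQuadrangle P L s t) :
    (s + t) ∣ s * t * (s * t + 1) := by
  have hsplit : s * t * (s + 1) * (t + 1) = s * t * (s * t + 1) + s * t * (s + t) := by ring
  have hmult := Q.card_eigenvalues_eq_sub_one_mul hs
  rw [hsplit] at hmult
  exact (Nat.dvd_add_left (dvd_mul_left _ _)).1 (hmult ▸ dvd_mul_left _ _)

/-- In a finite generalised quadrangle of order (s,t) with s,t ≥ 1, s+t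
divides st(st+1). -/
theorem s_add_t_dvd {P L : Type*} [Fintype P] [Fintype L] [Nonempty P]
    {s t : ℕ} (hs : 1 ≤ s) (ht : 1 ≤ t) (Q : GenQuadrangle P L s t) :
    (s + t) ∣ s * t * (s * t + 1) :=
  s_add_t_dvd_general hs Q
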